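/- arXiv:2310.16386 — 5 statements merged into one kernel-verified Lean document; each statement's English description precedes it below -/
import Mathlib

section
/- Let A₀, A₁, B₀, B₁ be orthogonal projections on ℂ^d (Hermitian idempotent complex d×d matrices). If Tr(B₁ · A₀ᵀ) = 0, Tr(B₀ · A₁ᵀ) = 0, and Tr((1 − B₁) · (1 − A₁ᵀ)) = 0, then Tr(B₀ · A₀ᵀ) = 0. (This is the key matrix step showing that the trace conditions encoding the three zero-probability Hardy conditions for a maximally entangled state force the Hardy success probability to vanish.) -/
open Matrix

lemma trace_ctm_zero {n : ℕ} (M : Matrix (Fin n) (Fin n) ℂ)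
    (h : (Mᴴ * M).trace = 0) : M = 0 := by
  have h' : ∑ j, ∑ i, Complex.normSq (M i j) = 0 := by
    have := h
    simp only [trace, diag, mul_apply, conjTranspose_apply] at this
    have : ((∑ j, ∑ i, (Complex.normSq (M i j) : ℂ))) = 0 := by
      rw [← this]
      refine Finset.sum_congr rfl fun j _ => Finset.sum_congr rfl fun i _ => ?_
      rw [Complex.normSq_eq_conj_mul_self]; rfl
    exact_mod_cast this
  ext i j
  have hj := (Finset.sum_eq_zero_iff_of_nonneg (fun j _ => Finset.sum_nonneg
    (fun i _ => Complex.normSq_nonneg _))).mp h' j (Finset.mem_univ j)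
  have hi := (Finset.sum_eq_zero_iff_of_nonneg (fun i _ => Complex.normSq_nonneg _)).mp hj i
    (Finset.mem_univ i)
  simpa using Complex.normSq_eq_zero.mp hi

lemma proj_mul_zero {n : ℕ} (P Q : Matrix (Fin n) (Fin n) ℂ)
    (hP : Pᴴ = P) (hP' : P * P = P) (hQ : Qᴴ = Q) (hQ' : Q * Q = Q)
    (h : (P * Q).trace = 0) : P * Q = 0 := by
  have key : (Q * P) = 0 := by
    apply trace_ctm_zero
    have : (Q * P)ᴴ * (Q * P) = P * Q * P := by
      rw [conjTranspose_mul, hP, hQ]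
      rw [Matrix.mul_assoc, ← Matrix.mul_assoc Q Q P, hQ', Matrix.mul_assoc]
    rw [this, ← trace_mul_cycle, Matrix.mul_assoc, hP', trace_mul_comm, h]
  calc P * Q = (Q * P)ᴴ := by rw [conjTranspose_mul, hP, hQ]
    _ = 0 := by rw [key]; simp

/-- Key matrix step for Proposition 1: if `A₀, A₁, B₀, B₁` are orthogonal projections
on `ℂ^d` with `Tr(B₁·A₀ᵀ) = 0`, `Tr(B₀·A₁ᵀ) = 0` and `Tr((1−B₁)·(1−A₁ᵀ)) = 0`,
then `Tr(B₀·A₀ᵀ) = 0`. -/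
theorem hardy_trace_step (d : ℕ) (A₀ A₁ B₀ B₁ : Matrix (Fin d) (Fin d) ℂ)
    (hA₀ : A₀ᴴ = A₀) (hA₀' : A₀ * A₀ = A₀)
    (hA₁ : A₁ᴴ = A₁) (hA₁' : A₁ * A₁ = A₁)
    (hB₀ : B₀ᴴ = B₀) (hB₀' : B₀ * B₀ = B₀)
    (hB₁ : B₁ᴴ = B₁) (hB₁' : B₁ * B₁ = B₁)
    (h1 : (B₁ * A₀ᵀ).trace = 0)
    (h2 : (B₀ * A₁ᵀ).trace = 0)
    (h3 : ((1 - B₁) * (1 - A₁ᵀ)).trace = 0) :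
    (B₀ * A₀ᵀ).trace = 0 := by
  have hA₁T : (A₁ᵀ)ᴴ = A₁ᵀ := by
    ext i j
    have := congrFun (congrFun hA₁ j) i
    simpa [conjTranspose_apply, transpose_apply] using this
  have hA₀T : (A₀ᵀ)ᴴ = A₀ᵀ := by
    ext i j
    have := congrFun (congrFun hA₀ j) i
    simpa [conjTranspose_apply, transpose_apply] using this
  have hA₁T' : A₁ᵀ * A₁ᵀ = A₁ᵀ := by rw [← transpose_mul, hA₁']
  have hA₀T' : A₀ᵀ * A₀ᵀ = A₀ᵀ := by rw [← transpose_mul, hA₀']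
  have hB₁c : (1 - B₁)ᴴ = 1 - B₁ := by simp [hB₁]
  have hB₁c' : (1 - B₁) * (1 - B₁) = 1 - B₁ := by
    noncomm_ring [hB₁']
  have hA₁Tc : (1 - A₁ᵀ)ᴴ = 1 - A₁ᵀ := by simp [hA₁T]
  have hA₁Tc' : (1 - A₁ᵀ) * (1 - A₁ᵀ) = 1 - A₁ᵀ := by
    noncomm_ring [hA₁T']
  have h2' : B₀ * A₁ᵀ = 0 := proj_mul_zero _ _ hB₀ hB₀' hA₁T hA₁T' h2
  have h3' : (1 - B₁) * (1 - A₁ᵀ) = 0 := proj_mul_zero _ _ hB₁c hB₁c' hA₁Tc hA₁Tc' h3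
  have h1' : B₁ * A₀ᵀ = 0 := proj_mul_zero _ _ hB₁ hB₁' hA₀T hA₀T' h1
  have h3'' : (1 - A₁ᵀ) * (1 - B₁) = 0 := by
    have := congrArg conjTranspose h3'
    rwa [conjTranspose_mul, hB₁c, hA₁Tc, conjTranspose_zero] at this
  have key : B₀ * (1 - B₁) = 0 := by
    have hx : A₁ᵀ * (1 - B₁) = 1 - B₁ := by
      have := h3''
      rw [sub_mul, one_mul, sub_eq_zero] at this
      exact this.symm
    rw [← hx, ← Matrix.mul_assoc, h2', Matrix.zero_mul]
  have final : B₀ * A₀ᵀ = 0 := by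
    have hx : (1 - B₁) * A₀ᵀ = A₀ᵀ := by
      rw [sub_mul, one_mul, h1', sub_zero]
    rw [← hx, ← Matrix.mul_assoc, key, Matrix.zero_mul]
  rw [final, trace_zero]
end

section
/- The maximally entangled state of any dimension cannot exhibit Hardy nonlocality with projective measurements: let d ≥ 1, let A₀, A₁, B₀, B₁ be orthogonal projections on ℂ^d, and for i, j, a, b ∈ {0,1} define the Born probabilities p(a,b | i,j) = ⟨φ⁺_d, (A_i^a ⊗ B_j^b) φ⁺_d⟩, where A_i^0 = A_i, A_i^1 = 1 − A_i, B_j^0 = B_j, B_j^1 = 1 − B_j, |φ⁺_d⟩ = (1/√d) ∑_{m=0}^{d-1} |m⟩⊗|m⟩, and A ⊗ B is the matrix Kronecker product. If p(0,0 | 0,1) = 0, p(0,0 | 1,0) = 0, and p(1,1 | 1,1) = 0, then p(0,0 | 0,0) = 0. -/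
open Matrix Kronecker

/-- The normalized maximally entangled vector `|φ⁺_d⟩ = (1/√d) ∑_{m=0}^{d-1} |m⟩⊗|m⟩`
in `ℂ^d ⊗ ℂ^d`, indexed by `Fin d × Fin d`. -/
noncomputable def phiPlus (d : ℕ) : Fin d × Fin d → ℂ :=
  fun p => if p.1 = p.2 then 1 / (Real.sqrt d : ℂ) else 0

/-- From a projection `P`, the two effects of the associated dichotomic projective
measurement: outcome `0` is `P`, outcome `1` is `1 − P`. -/
noncomputable def projSel {d : ℕ} (P : Matrix (Fin d) (Fin d) ℂ) : Fin 2 → Matrix (Fin d) (Fin d) ℂ :=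
  fun a => if a = 0 then P else 1 - P

/-- The Born probability `⟨φ⁺_d, (M ⊗ N) φ⁺_d⟩` in the maximally entangled state. -/
noncomputable def born (d : ℕ) (M N : Matrix (Fin d) (Fin d) ℂ) : ℂ :=
  star (phiPlus d) ⬝ᵥ ((M ⊗ₖ N) *ᵥ phiPlus d)

lemma born_eq (d : ℕ) (M N : Matrix (Fin d) (Fin d) ℂ) :
    born d M N = (d : ℂ)⁻¹ * Matrix.trace (M * Nᵀ) := by
  simp only [born, dotProduct, mulVec, Pi.star_apply, phiPlus, kroneckerMap_apply,
    Matrix.trace, Matrix.diag, mul_apply, transpose_apply, Fintype.sum_prod_type]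
  simp [Finset.mul_sum, Finset.sum_mul, apply_ite, mul_ite, ite_mul, Finset.sum_ite_eq,
    Finset.sum_ite_eq']
  have hs : ((Real.sqrt d : ℝ) : ℂ)⁻¹ * ((Real.sqrt d : ℝ) : ℂ)⁻¹ = (d : ℂ)⁻¹ := by
    have h2 : ((Real.sqrt d : ℝ) : ℂ) * ((Real.sqrt d : ℝ) : ℂ) = (d:ℂ) := by
      norm_cast
      exact Real.mul_self_sqrt (Nat.cast_nonneg d)
    rw [← mul_inv, h2]
  refine Finset.sum_congr rfl fun x _ => Finset.sum_congr rfl fun y _ => ?_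
  rw [← hs]; ring

lemma eq_zero_of_trace_conjTranspose_mul_self {d : ℕ} (A : Matrix (Fin d) (Fin d) ℂ)
    (h : Matrix.trace (Aᴴ * A) = 0) : A = 0 := by
  have htr : Matrix.trace (Aᴴ * A) = ((∑ i, ∑ j, Complex.normSq (A j i) : ℝ) : ℂ) := by
    push_cast
    simp [Matrix.trace, Matrix.diag, mul_apply, conjTranspose_apply,
      Complex.normSq_eq_conj_mul_self]
  rw [htr, Complex.ofReal_eq_zero] at h
  have hnn : ∀ i ∈ Finset.univ, (0:ℝ) ≤ ∑ j, Complex.normSq (A j i) :=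
    fun i _ => Finset.sum_nonneg fun j _ => Complex.normSq_nonneg _
  ext j i
  have h1 := (Finset.sum_eq_zero_iff_of_nonneg hnn).mp h i (Finset.mem_univ i)
  have h2 := (Finset.sum_eq_zero_iff_of_nonneg
    (fun j _ => Complex.normSq_nonneg (A j i))).mp h1 j (Finset.mem_univ j)
  simpa using Complex.normSq_eq_zero.mp h2

lemma mul_eq_zero_of_trace {d : ℕ} (P Q : Matrix (Fin d) (Fin d) ℂ)
    (hP : Pᴴ = P) (hPi : P * P = P) (hQ : Qᴴ = Q) (hQi : Q * Q = Q)
    (h : Matrix.trace (P * Q) = 0) : P * Q = 0 := by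
  apply eq_zero_of_trace_conjTranspose_mul_self
  have e : (P * Q)ᴴ * (P * Q) = Q * (P * Q) := by
    rw [conjTranspose_mul, hP, hQ, mul_assoc, ← mul_assoc P P Q, hPi]
  rw [e, Matrix.trace_mul_comm, mul_assoc, hQi, h]

/-- The maximally entangled state of any dimension cannot exhibit Hardy nonlocality with
projective measurements: with `p(a,b|i,j) = ⟨φ⁺_d, (A_i^a ⊗ B_j^b) φ⁺_d⟩`, if
`p(0,0|0,1) = p(0,0|1,0) = p(1,1|1,1) = 0` then `p(0,0|0,0) = 0`. -/
theorem maxEnt_no_hardy (d : ℕ) (hd : 1 ≤ d)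
    (A B : Fin 2 → Matrix (Fin d) (Fin d) ℂ)
    (hAherm : ∀ i, (A i)ᴴ = A i) (hAproj : ∀ i, A i * A i = A i)
    (hBherm : ∀ j, (B j)ᴴ = B j) (hBproj : ∀ j, B j * B j = B j)
    (h01 : born d (projSel (A 0) 0) (projSel (B 1) 0) = 0)
    (h10 : born d (projSel (A 1) 0) (projSel (B 0) 0) = 0)
    (h11 : born d (projSel (A 1) 1) (projSel (B 1) 1) = 0) :
    born d (projSel (A 0) 0) (projSel (B 0) 0) = 0 := by
  have hdne : ((d : ℂ))⁻¹ ≠ 0 := by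
    apply inv_ne_zero
    exact_mod_cast (Nat.pos_of_ne_zero (by omega)).ne'
  simp only [projSel, born_eq, show ((0:Fin 2) = 0) ↔ True by simp,
    show ((1:Fin 2) = 0) ↔ False by decide, if_true, if_false] at h01 h10 h11 ⊢
  have t01 := (mul_eq_zero.mp h01).resolve_left hdne
  have t10 := (mul_eq_zero.mp h10).resolve_left hdne
  have t11 := (mul_eq_zero.mp h11).resolve_left hdne
  have hQherm : ∀ j, ((B j)ᵀ)ᴴ = (B j)ᵀ := fun j => by
    ext i k
    simpa [conjTranspose_apply, transpose_apply] using congrFun (congrFun (hBherm j) k) i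
  have hQproj : ∀ j, (B j)ᵀ * (B j)ᵀ = (B j)ᵀ := fun j => by
    rw [← transpose_mul, hBproj j]
  have oneSub_herm : ∀ Q : Matrix (Fin d) (Fin d) ℂ, Qᴴ = Q → (1-Q)ᴴ = 1-Q := fun Q h => by
    rw [conjTranspose_sub, conjTranspose_one, h]
  have oneSub_proj : ∀ Q : Matrix (Fin d) (Fin d) ℂ, Q*Q = Q → (1-Q)*(1-Q) = 1-Q := fun Q h => by
    rw [mul_sub, sub_mul, sub_mul, h]; noncomm_ring
  have etr : ((1 : Matrix (Fin d) (Fin d) ℂ) - B 1)ᵀ = 1 - (B 1)ᵀ := by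
    rw [transpose_sub, transpose_one]
  rw [etr] at t11
  have z01 : A 0 * (B 1)ᵀ = 0 :=
    mul_eq_zero_of_trace _ _ (hAherm 0) (hAproj 0) (hQherm 1) (hQproj 1) t01
  have z10 : A 1 * (B 0)ᵀ = 0 :=
    mul_eq_zero_of_trace _ _ (hAherm 1) (hAproj 1) (hQherm 0) (hQproj 0) t10
  have z11 : (1 - A 1) * ((1 : Matrix (Fin d) (Fin d) ℂ) - (B 1)ᵀ) = 0 :=
    mul_eq_zero_of_trace _ _ (oneSub_herm _ (hAherm 1)) (oneSub_proj _ (hAproj 1))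
      (oneSub_herm _ (hQherm 1)) (oneSub_proj _ (hQproj 1)) t11
  have z11' : ((1 : Matrix (Fin d) (Fin d) ℂ) - (B 1)ᵀ) * (1 - A 1) = 0 := by
    have := congrArg conjTranspose z11
    rwa [conjTranspose_mul, oneSub_herm _ (hAherm 1), oneSub_herm _ (hQherm 1),
      conjTranspose_zero] at this
  have e1 : A 0 * ((1 : Matrix (Fin d) (Fin d) ℂ) - (B 1)ᵀ) = A 0 := by
    rw [mul_sub, mul_one, z01, sub_zero]
  have e2 : ((1 : Matrix (Fin d) (Fin d) ℂ) - (B 1)ᵀ) = (1 - (B 1)ᵀ) * A 1 := by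
    rw [mul_sub, mul_one, sub_eq_zero] at z11'
    exact z11'
  have zg : A 0 * (B 0)ᵀ = 0 := by
    calc A 0 * (B 0)ᵀ = A 0 * ((1 : Matrix (Fin d) (Fin d) ℂ) - (B 1)ᵀ) * (B 0)ᵀ := by rw [e1]
      _ = A 0 * (((1 : Matrix (Fin d) (Fin d) ℂ) - (B 1)ᵀ) * A 1) * (B 0)ᵀ := by rw [← e2]
      _ = A 0 * ((1 : Matrix (Fin d) (Fin d) ℂ) - (B 1)ᵀ) * (A 1 * (B 0)ᵀ) := by noncomm_ring
      _ = 0 := by rw [z10, mul_zero]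
  rw [zg, Matrix.trace_zero, mul_zero]
end

section
/- Let s be a real number and let A be a complex 2×2 matrix whose characteristic polynomial is (X − s)(X − (1−s)). Then for every n ≥ 1, the n-fold Kronecker power A^{⊗n} has characteristic polynomial ∏_{j=0}^{n} (X − s^{n−j}(1−s)^j)^{C(n,j)}, where C(n,j) is the binomial coefficient; that is, the eigenvalues of A^{⊗n} are s^{n−j}(1−s)^j with algebraic multiplicity C(n,j) for j = 0, …, n. -/
open Matrix Polynomial

/-- The `n`-fold Kronecker power of a square matrix `A`, indexed by `Fin n → m`
(the entry at `(i, j)` is `∏ k, A (i k) (j k)`, which is exactly the iterated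
Kronecker product `A ⊗ A ⊗ ⋯ ⊗ A` under the canonical identification of the
index types). -/
noncomputable def kronPow {m : Type*} [Fintype m] (A : Matrix m m ℂ) (n : ℕ) :
    Matrix (Fin n → m) (Fin n → m) ℂ :=
  fun i j => ∏ k, A (i k) (j k)

/-!
Conjugate `A` to an upper-triangular `T` with diagonal `(s, 1 - s)`, using an eigenvector for `s`
as first column of the conjugating matrix. Kronecker powers are multiplicative, so `kronPow A n`
is conjugate to `kronPow T n`, which is upper triangular for the lexicographic order on
multi-indices; its diagonal entry at a multi-index with `j` ones is `s ^ (n - j) * (1 - s) ^ j`,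
and there are `n.choose j` such multi-indices.
-/

open Finset

theorem prod_fun_fin_two_eq_prod_range_pow_choose {R M : Type*} [CommMonoid R] [CommMonoid M]
    (f : R → M) (d : Fin 2 → R) (n : ℕ) :
    ∏ i : Fin n → Fin 2, f (∏ k, d (i k)) =
      ∏ j ∈ range (n + 1), f (d 0 ^ (n - j) * d 1 ^ j) ^ n.choose j := by
  classical
  let χ : Finset (Fin n) → Fin n → Fin 2 := fun S k => if k ∈ S then 1 else 0
  have hχ : Function.Bijective χ := by
    refine (Fintype.bijective_iff_injective_and_card χ).mpr ⟨fun S S' h => ?_, by simp⟩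
    ext k
    have hk := congrFun h k
    by_cases hS : k ∈ S <;> by_cases hS' : k ∈ S' <;> simp_all [χ]
  have hprod (S : Finset (Fin n)) : ∏ k, d (χ S k) = d 0 ^ (n - #S) * d 1 ^ #S := by
    simp only [χ, apply_ite d, prod_ite]
    rw [← compl_filter, filter_mem_eq_inter, univ_inter, prod_const, prod_const, card_compl,
      Fintype.card_fin, mul_comm]
  rw [← Fintype.prod_bijective χ hχ (fun S => f (d 0 ^ (n - #S) * d 1 ^ #S)) _
    fun S => by rw [hprod], ← powerset_univ, prod_powerset, card_univ, Fintype.card_fin]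
  refine prod_congr rfl fun j _ => ?_
  rw [prod_powersetCard j univ fun j => f (d 0 ^ (n - j) * d 1 ^ j), card_univ, Fintype.card_fin]

namespace Matrix

section KronPow

variable {m : Type*} [Fintype m]

theorem kronPow_mul (A B : Matrix m m ℂ) (n : ℕ) :
    kronPow (A * B) n = kronPow A n * kronPow B n := by
  ext i j
  simp only [kronPow, mul_apply, prod_univ_sum, Fintype.piFinset_univ, prod_mul_distrib]

theorem kronPow_one [DecidableEq m] (n : ℕ) : kronPow (1 : Matrix m m ℂ) n = 1 := by
  ext i j
  by_cases h : i = j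
  · subst h
    simp [kronPow]
  · obtain ⟨k, hk⟩ := Function.ne_iff.mp h
    rw [one_apply_ne h]
    exact prod_eq_zero (mem_univ k) (one_apply_ne hk)

variable (m) in
@[simps]
noncomputable def kronPowHom [DecidableEq m] (n : ℕ) :
    Matrix m m ℂ →* Matrix (Fin n → m) (Fin n → m) ℂ where
  toFun A := kronPow A n
  map_one' := kronPow_one n
  map_mul' A B := kronPow_mul A B n

theorem charpoly_kronPow_units_conj [DecidableEq m] (U : (Matrix m m ℂ)ˣ) (T : Matrix m m ℂ)
    (n : ℕ) :
    (kronPow ((U : Matrix m m ℂ) * T * (U : Matrix m m ℂ)⁻¹) n).charpoly =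
      (kronPow T n).charpoly := by
  set V := Units.map (kronPowHom m n) U
  have hV : kronPow ((U : Matrix m m ℂ) * T * (U : Matrix m m ℂ)⁻¹) n =
      (V : Matrix _ _ ℂ) * kronPow T n * (V : Matrix _ _ ℂ)⁻¹ := by
    rw [← coe_units_inv, ← coe_units_inv, Units.coe_map, Units.coe_map_inv]
    simp only [kronPowHom_apply, kronPow_mul]
  rw [hV, charpoly_units_conj]

theorem isUpperTriangular_kronPow_submatrix_ofLex [LinearOrder m] {T : Matrix m m ℂ}
    (hT : T.IsUpperTriangular) (n : ℕ) :
    ((kronPow T n).submatrix ofLex ofLex : Matrix (Lex (Fin n → m)) _ ℂ).IsUpperTriangular := by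
  rintro i j ⟨k, -, hk⟩
  exact prod_eq_zero (mem_univ k) (hT hk)

theorem charpoly_kronPow_of_isUpperTriangular [LinearOrder m] {T : Matrix m m ℂ}
    (hT : T.IsUpperTriangular) (n : ℕ) :
    (kronPow T n).charpoly = ∏ i : Fin n → m, (X - C (∏ k, T (i k) (i k))) := by
  rw [← charpoly_reindex toLex]
  exact charpoly_of_isUpperTriangular _ (isUpperTriangular_kronPow_submatrix_ofLex hT n)

end KronPow

theorem col_units_inv_mul_mul_of_mulVec_col_eq_smul {m K : Type*} [Fintype m] [DecidableEq m]
    [CommRing K] (A : Matrix m m K) (U : (Matrix m m K)ˣ) {j : m} {μ : K}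
    (h : A *ᵥ (U : Matrix m m K).col j = μ • (U : Matrix m m K).col j) :
    ((↑U⁻¹ : Matrix m m K) * A * U).col j = μ • Pi.single j 1 := by
  rw [← mulVec_single_one] at h ⊢
  rw [← mulVec_mulVec, ← mulVec_mulVec, h, mulVec_smul, mulVec_mulVec, Units.inv_mul,
    one_mulVec]

theorem exists_units_col_zero_eq {K : Type*} [Field K] {v : Fin 2 → K} (hv : v ≠ 0) :
    ∃ U : (Matrix (Fin 2) (Fin 2) K)ˣ, (U : Matrix (Fin 2) (Fin 2) K).col 0 = v := by
  suffices ∃ U : Matrix (Fin 2) (Fin 2) K, U.det ≠ 0 ∧ U.col 0 = v by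
    obtain ⟨U, hdet, hcol⟩ := this
    exact ⟨nonsingInvUnit U (isUnit_iff_ne_zero.mpr hdet), hcol⟩
  by_cases h0 : v 0 = 0
  · have h1 : v 1 ≠ 0 := fun h1 => hv (funext fun k => by fin_cases k <;> assumption)
    refine ⟨!![0, 1; v 1, 0], by simpa [det_fin_two] using h1, ?_⟩
    ext k; fin_cases k <;> simp [h0]
  · refine ⟨!![v 0, 0; v 1, 1], by simpa [det_fin_two] using h0, ?_⟩
    ext k; fin_cases k <;> simp

theorem exists_isUpperTriangular_units_conj_fin_two {K : Type*} [Field K]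
    (A : Matrix (Fin 2) (Fin 2) K) {μ : K} (hμ : A.charpoly.IsRoot μ) :
    ∃ (U : (Matrix (Fin 2) (Fin 2) K)ˣ) (T : Matrix (Fin 2) (Fin 2) K),
      T.IsUpperTriangular ∧ T 0 0 = μ ∧
        A = (U : Matrix (Fin 2) (Fin 2) K) * T * (U : Matrix (Fin 2) (Fin 2) K)⁻¹ := by
  obtain ⟨v, hv⟩ := ((Module.End.hasEigenvalue_iff_isRoot_charpoly (toLin' A) μ).mpr
    (by rwa [charpoly_toLin'])).exists_hasEigenvector
  obtain ⟨U, hU⟩ := exists_units_col_zero_eq hv.2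
  have hcol := col_units_inv_mul_mul_of_mulVec_col_eq_smul A U (j := 0) (μ := μ)
    (by rw [hU, ← toLin'_apply, hv.apply_eq_smul])
  refine ⟨U, _, fun i j hij => ?_, by simpa using congrFun hcol 0, by simp [mul_assoc]⟩
  fin_cases i <;> fin_cases j
  all_goals first | exact absurd hij (by decide) | simpa using congrFun hcol 1

end Matrix

theorem charpoly_kronPow_general (s : ℝ) (A : Matrix (Fin 2) (Fin 2) ℂ)
    (hA : A.charpoly = (X - C (s : ℂ)) * (X - C (1 - (s : ℂ))))
    (n : ℕ) :
    (kronPow A n).charpoly =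
      ∏ j ∈ Finset.range (n + 1),
        (X - C ((s : ℂ) ^ (n - j) * (1 - (s : ℂ)) ^ j)) ^ n.choose j := by
  obtain ⟨U, T, hT, hT00, rfl⟩ := exists_isUpperTriangular_units_conj_fin_two A (μ := s)
    (by simp [hA])
  have hT11 : T 1 1 = 1 - s := by
    have hchar :
        (X - C (s : ℂ)) * (X - C (T 1 1)) = (X - C (s : ℂ)) * (X - C (1 - (s : ℂ))) := by
      rw [← hA, ← hT00, ← Fin.prod_univ_two fun i => X - C (T i i),
        ← charpoly_of_isUpperTriangular T hT, charpoly_units_conj]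
    exact C_injective (sub_right_injective (mul_left_cancel₀ (X_sub_C_ne_zero _) hchar))
  rw [charpoly_kronPow_units_conj, charpoly_kronPow_of_isUpperTriangular hT,
    prod_fun_fin_two_eq_prod_range_pow_choose (fun x => X - C x) fun i => T i i, hT00, hT11]

/-- If a complex `2×2` matrix `A` has characteristic polynomial `(X−s)(X−(1−s))`,
then its `n`-fold Kronecker power has characteristic polynomial
`∏_{j=0}^{n} (X − s^{n−j}(1−s)^j)^{C(n,j)}`. -/
theorem charpoly_kronPow (s : ℝ) (A : Matrix (Fin 2) (Fin 2) ℂ)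
    (hA : A.charpoly = (X - C (s : ℂ)) * (X - C (1 - (s : ℂ))))
    (n : ℕ) (hn : 1 ≤ n) :
    (kronPow A n).charpoly =
      ∏ j ∈ Finset.range (n + 1),
        (X - C ((s : ℂ) ^ (n - j) * (1 - (s : ℂ)) ^ j)) ^ n.choose j :=
  charpoly_kronPow_general s A hA n
end

section
/- Spectral form of the converse direction of Theorem 2: let n ≥ 1, let ρ be a 2×2 complex positive semidefinite matrix with trace 1 and eigenvalues s and 1−s where 0 < s < 1, and let σ be a complex positive semidefinite m×m matrix. If every nonzero eigenvalue of the Kronecker product ρ ⊗ σ equals 2^{−n} (i.e., the nonzero spectrum of ρ ⊗ σ coincides, as a multiset, with the spectrum of the reduced state of n copies of the maximally entangled two-qubit state), then s = 1/2. -/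
/-!
If `t ≠ 0` is an eigenvalue of the Hermitian matrix `σ` (one exists because `ρ ⊗ σ ≠ 0`), then
tensoring eigenvectors shows that `s t` and `(1 - s) t` are nonzero eigenvalues of `ρ ⊗ σ`. All
nonzero eigenvalues of `ρ ⊗ σ` equal `2⁻ⁿ`, so `s t = (1 - s) t`, whence `s = 1 - s`.
-/

open Matrix Kronecker Polynomial
open scoped ComplexOrder

namespace Matrix

variable {l m n p : Type*} [Fintype m] [Fintype p]

theorem kronecker_mulVec_mul {R : Type*} [CommSemiring R] (A : Matrix l m R) (B : Matrix n p R)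
    (v : m → R) (w : p → R) :
    (A ⊗ₖ B) *ᵥ (fun q => v q.1 * w q.2) = fun q => (A *ᵥ v) q.1 * (B *ᵥ w) q.2 := by
  ext ⟨i, j⟩
  simp only [mulVec, dotProduct, kroneckerMap_apply, Fintype.sum_prod_type, Finset.sum_mul_sum,
    mul_mul_mul_comm]

variable {R : Type*} [CommRing R] [Fintype l] [Fintype n] [DecidableEq l] [DecidableEq n]

theorem isRoot_charpoly_iff_exists_mulVec_eq_smul [IsDomain R] (A : Matrix n n R) (r : R) :
    A.charpoly.IsRoot r ↔ ∃ v ≠ 0, A *ᵥ v = r • v := by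
  rw [← charpoly_toLin', ← Module.End.hasEigenvalue_iff_isRoot_charpoly]
  constructor
  · intro hr
    obtain ⟨v, hv, hv0⟩ := hr.exists_hasEigenvector
    exact ⟨v, hv0, Module.End.mem_eigenspace_iff.1 hv⟩
  · rintro ⟨v, hv0, hv⟩
    exact Module.End.hasEigenvalue_of_hasEigenvector ⟨Module.End.mem_eigenspace_iff.2 hv, hv0⟩

theorem isRoot_charpoly_kronecker_mul [IsDomain R] {A : Matrix l l R} {B : Matrix n n R} {a b : R}
    (ha : A.charpoly.IsRoot a) (hb : B.charpoly.IsRoot b) : (A ⊗ₖ B).charpoly.IsRoot (a * b) := by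
  obtain ⟨v, hv0, hv⟩ := (isRoot_charpoly_iff_exists_mulVec_eq_smul A a).1 ha
  obtain ⟨w, hw0, hw⟩ := (isRoot_charpoly_iff_exists_mulVec_eq_smul B b).1 hb
  obtain ⟨i, hi⟩ := Function.ne_iff.1 hv0
  obtain ⟨j, hj⟩ := Function.ne_iff.1 hw0
  refine (isRoot_charpoly_iff_exists_mulVec_eq_smul _ _).2
    ⟨fun q => v q.1 * w q.2, Function.ne_iff.2 ⟨(i, j), mul_ne_zero hi hj⟩, ?_⟩
  rw [kronecker_mulVec_mul, hv, hw]
  ext q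
  simp only [Pi.smul_apply, smul_eq_mul]
  ring

theorem ne_zero_of_isRoot_charpoly [Nontrivial R] [NoZeroDivisors R] {A : Matrix n n R} {r : R}
    (hA : A.charpoly.IsRoot r) (hr : r ≠ 0) : A ≠ 0 := by
  rintro rfl
  rw [charpoly_zero, IsRoot, eval_pow, eval_X] at hA
  exact hr (pow_eq_zero_iff'.1 hA).1

theorem IsHermitian.exists_ne_zero_isRoot_charpoly {𝕜 : Type*} [RCLike 𝕜] {A : Matrix n n 𝕜}
    (hA : A.IsHermitian) (h : A ≠ 0) : ∃ t : 𝕜, t ≠ 0 ∧ A.charpoly.IsRoot t := by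
  obtain ⟨v, t, ht, hv0, hv⟩ := hA.exists_eigenvector_of_ne_zero h
  refine ⟨t, RCLike.ofReal_ne_zero.2 ht,
    (isRoot_charpoly_iff_exists_mulVec_eq_smul A _).2 ⟨v, hv0, ?_⟩⟩
  rw [hv, RCLike.real_smul_eq_coe_smul (K := 𝕜)]

end Matrix

open Classical in
theorem spectral_thm2_converse_general (n : ℕ) (s : ℝ) (hs0 : 0 < s) (hs1 : s < 1)
    (ρ : Matrix (Fin 2) (Fin 2) ℂ)
    (hev : ρ.charpoly = (X - C (s : ℂ)) * (X - C (1 - (s : ℂ))))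
    (m : ℕ) (σ : Matrix (Fin m) (Fin m) ℂ) (hσ : σ.PosSemidef)
    (h : (ρ ⊗ₖ σ).charpoly.roots.filter (fun z => z ≠ 0) =
         Multiset.replicate (2 ^ n) (((2 : ℂ) ^ n)⁻¹)) :
    s = 1 / 2 := by
  have hroots_eq : ∀ z ≠ 0, (ρ ⊗ₖ σ).charpoly.IsRoot z → z = ((2 : ℂ) ^ n)⁻¹ := fun z hz hroot =>
    Multiset.eq_of_mem_replicate <| h ▸ Multiset.mem_filter.2
      ⟨(mem_roots (charpoly_monic _).ne_zero).2 hroot, hz⟩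
  have hroot : (ρ ⊗ₖ σ).charpoly.IsRoot ((2 : ℂ) ^ n)⁻¹ := isRoot_of_mem_roots
    (Multiset.mem_filter.1 (h ▸ Multiset.mem_replicate.2 ⟨by positivity, rfl⟩)).1
  obtain ⟨t, ht, hσt⟩ := hσ.isHermitian.exists_ne_zero_isRoot_charpoly <| by
    rintro rfl
    exact ne_zero_of_isRoot_charpoly hroot (by simp) (kronecker_zero ρ)
  have hρs : ρ.charpoly.IsRoot (s : ℂ) := by simp [hev]
  have hρs' : ρ.charpoly.IsRoot (1 - s : ℂ) := by simp [hev]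
  have hs : (s : ℂ) ≠ 0 := by exact_mod_cast hs0.ne'
  have hs' : (1 - s : ℂ) ≠ 0 := by exact_mod_cast (sub_pos.2 hs1).ne'
  have hst : (s : ℂ) * t = (1 - s) * t :=
    (hroots_eq _ (mul_ne_zero hs ht) (isRoot_charpoly_kronecker_mul hρs hσt)).trans
      (hroots_eq _ (mul_ne_zero hs' ht) (isRoot_charpoly_kronecker_mul hρs' hσt)).symm
  have : (s : ℂ) = 1 - s := mul_right_cancel₀ ht hst
  have : s = 1 - s := by exact_mod_cast this
  linarith

open Classical in
/-- Spectral form of the converse direction of Theorem 2: let `ρ` be a `2×2` positive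
semidefinite matrix with trace `1` and eigenvalues `s` and `1−s` (`0 < s < 1`), and let
`σ` be positive semidefinite. If the nonzero spectrum of `ρ ⊗ σ` coincides, as a
multiset, with the spectrum of the reduced state of `n` copies of the maximally
entangled two-qubit state (i.e. `2ⁿ` eigenvalues all equal to `2^{−n}`), then `s = 1/2`. -/
theorem spectral_thm2_converse (n : ℕ) (hn : 1 ≤ n) (s : ℝ) (hs0 : 0 < s) (hs1 : s < 1)
    (ρ : Matrix (Fin 2) (Fin 2) ℂ) (hρ : ρ.PosSemidef) (htr : ρ.trace = 1)
    (hev : ρ.charpoly = (X - C (s : ℂ)) * (X - C (1 - (s : ℂ))))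
    (m : ℕ) (σ : Matrix (Fin m) (Fin m) ℂ) (hσ : σ.PosSemidef)
    (h : (ρ ⊗ₖ σ).charpoly.roots.filter (fun z => z ≠ 0) =
         Multiset.replicate (2 ^ n) (((2 : ℂ) ^ n)⁻¹)) :
    s = 1 / 2 :=
  spectral_thm2_converse_general n s hs0 hs1 ρ hev m σ hσ h
end

section
/- Unitary form of the converse direction of Theorem 2: let n ≥ 1 and let F = (√2)⁻¹ · 1₂ (the matrix form of the maximally entangled two-qubit state). If there exist unitary 2ⁿ×2ⁿ complex matrices U and V, a complex 2×2 matrix M with Tr(M·Mᴴ) = 1 whose Gram matrix M·Mᴴ has eigenvalues s and 1−s with 0 < s < 1, and a complex 2^{n−1}×2^{n−1} matrix Z, such that U · F^{⊗n} · Vᵀ = M ⊗ Z (after the canonical reindexings to Fin 2ⁿ), then s = 1/2. Equivalently: no number of copies of the maximally entangled two-qubit state can be mapped by local unitaries to a non-maximally entangled two-qubit pure state in tensor with any residual bipartite pure state. -/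
/-!
Since `F^{⊗n} = 2^{-n/2} • 1` and `U * Vᵀ` is unitary, the left-hand side `W` satisfies
`W * Wᴴ = 2⁻ⁿ • 1`. For `W = M ⊗ Z` this reads `(M * Mᴴ) ⊗ (Z * Zᴴ) = 2⁻ⁿ • 1`, which forces
`M * Mᴴ` to be scalar, hence `(1/2) • 1` by the trace condition. Its characteristic polynomial
`(X - 1/2)²` then has `s` as a root only if `s = 1/2`.
-/

open Matrix Kronecker Polynomial

lemma kronPow_smul_one {m : Type*} [Fintype m] [DecidableEq m] (c : ℂ) (n : ℕ) :
    kronPow (c • (1 : Matrix m m ℂ)) n = c ^ n • 1 := by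
  ext i j
  by_cases hij : i = j
  · subst hij
    simp [kronPow, one_apply]
  · obtain ⟨k, hk⟩ := Function.ne_iff.mp hij
    rw [kronPow, Finset.prod_eq_zero (Finset.mem_univ k) (by simp [hk])]
    simp [hij]

namespace Matrix

variable {l m n p R : Type*}

lemma reindex_smul_one [DecidableEq m] [DecidableEq n] [MulZeroOneClass R] (e : m ≃ n) (c : R) :
    reindex e e (c • (1 : Matrix m m R)) = c • 1 := by
  ext
  simp [one_apply]

lemma reindex_eq_smul_one_iff [DecidableEq m] [DecidableEq n] [MulZeroOneClass R] (e : m ≃ n)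
    (A : Matrix m m R) (c : R) : reindex e e A = c • 1 ↔ A = c • 1 := by
  rw [← reindex_smul_one e, (reindex e e).injective.eq_iff]

lemma reindex_mul_conjTranspose [Fintype m] [Fintype n] [NonUnitalSemiring R] [StarRing R]
    (e : m ≃ n) (A : Matrix m m R) :
    reindex e e A * (reindex e e A)ᴴ = reindex e e (A * Aᴴ) := by
  rw [reindex_apply, reindex_apply, conjTranspose_submatrix, submatrix_mul_equiv]

lemma kronecker_mul_conjTranspose [Fintype m] [Fintype p] [CommSemiring R] [StarRing R]
    (A : Matrix l m R) (B : Matrix n p R) :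
    (A ⊗ₖ B) * (A ⊗ₖ B)ᴴ = (A * Aᴴ) ⊗ₖ (B * Bᴴ) := by
  rw [conjTranspose_kronecker, mul_kronecker_mul]

lemma exists_eq_smul_one_of_kronecker_eq_smul_one [DecidableEq m] [DecidableEq n] [Nonempty n]
    [Field R] {A : Matrix m m R} {B : Matrix n n R} {t : R} (ht : t ≠ 0)
    (h : A ⊗ₖ B = t • 1) : ∃ c : R, A = c • 1 := by
  obtain ⟨j⟩ := ‹Nonempty n›
  have entry (i i' : m) : A i i' * B j j = if i = i' then t else 0 := by
    simpa [one_apply] using congrFun₂ h (i, j) (i', j)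
  refine ⟨t / B j j, ?_⟩
  ext i i'
  have hB : B j j ≠ 0 := fun h0 => ht (by simpa [h0] using (entry i i).symm)
  rw [smul_apply, one_apply, smul_ite, smul_eq_mul, mul_one, smul_zero, ← zero_div (B j j),
    ← ite_div, eq_div_iff hB, entry]

lemma charpoly_smul_one [Fintype n] [DecidableEq n] [CommRing R] (c : R) :
    (c • (1 : Matrix n n R)).charpoly = (X - C c) ^ Fintype.card n := by
  rw [smul_one_eq_diagonal, charpoly_diagonal, Finset.prod_const, Finset.card_univ]

end Matrix

/-- Unitary form of the converse direction of Theorem 2: with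
`F = (√2)⁻¹·1₂` the matrix of the maximally entangled two-qubit state, if for some
`n ≥ 1` there exist `2ⁿ×2ⁿ` unitaries `U, V`, a two-qubit pure-state matrix `M`
(`Tr(M·Mᴴ) = 1`) whose Gram matrix has eigenvalues `s` and `1−s` with `0 < s < 1`,
and a matrix `Z` with `U · F^{⊗n} · Vᵀ = M ⊗ Z` (under the canonical reindexings),
then `s = 1/2`. -/
theorem unitary_thm2_converse (n : ℕ) (hn : 1 ≤ n) (s : ℝ)
    (h : ∃ (U V : Matrix (Fin (2 ^ n)) (Fin (2 ^ n)) ℂ)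
           (M : Matrix (Fin 2) (Fin 2) ℂ)
           (Z : Matrix (Fin (2 ^ (n - 1))) (Fin (2 ^ (n - 1))) ℂ),
        U * Uᴴ = 1 ∧ V * Vᴴ = 1 ∧
        (M * Mᴴ).trace = 1 ∧
        (M * Mᴴ).charpoly = (X - C (s : ℂ)) * (X - C (1 - (s : ℂ))) ∧
        U * (Matrix.reindex finFunctionFinEquiv finFunctionFinEquiv
              (kronPow (((Real.sqrt 2 : ℂ))⁻¹ • (1 : Matrix (Fin 2) (Fin 2) ℂ)) n)) * Vᵀ =
          Matrix.reindex
            (finProdFinEquiv.trans (finCongr (by rw [← pow_succ', Nat.sub_add_cancel hn])))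
            (finProdFinEquiv.trans (finCongr (by rw [← pow_succ', Nat.sub_add_cancel hn])))
            (M ⊗ₖ Z)) :
    s = 1 / 2 := by
  obtain ⟨U, V, M, Z, hU, hV, htr, hcp, heq⟩ := h
  have hW : U * Vᵀ ∈ unitaryGroup (Fin (2 ^ n)) ℂ :=
    mul_mem (mem_unitaryGroup_iff.2 hU)
      (transpose_mem_unitaryGroup_iff.2 (mem_unitaryGroup_iff.2 hV))
  rw [kronPow_smul_one, reindex_smul_one, Matrix.mul_smul, mul_one, Matrix.smul_mul] at heq
  have hgram := congrArg (fun A => A * Aᴴ) heq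
  simp only [reindex_mul_conjTranspose, kronecker_mul_conjTranspose, conjTranspose_smul,
    Matrix.smul_mul, Matrix.mul_smul, smul_smul] at hgram
  rw [← star_eq_conjTranspose (U * Vᵀ), mem_unitaryGroup_iff.1 hW] at hgram
  have : Nonempty (Fin (2 ^ (n - 1))) := ⟨⟨0, by positivity⟩⟩
  obtain ⟨a, ha⟩ := exists_eq_smul_one_of_kronecker_eq_smul_one (by simp)
    ((reindex_eq_smul_one_iff _ _ _).1 hgram.symm)
  have ha' : a = 1 / 2 := by
    rw [ha, trace_smul, trace_one, Fintype.card_fin] at htr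
    linear_combination htr / 2
  rw [ha, ha', charpoly_smul_one, Fintype.card_fin] at hcp
  have hroot := congrArg (eval (s : ℂ)) hcp
  simp only [eval_pow, eval_mul, eval_sub, eval_X, eval_C, sub_self, zero_mul] at hroot
  exact Complex.ofReal_injective <| by
    push_cast
    exact sub_eq_zero.1 (pow_eq_zero_iff two_ne_zero |>.1 hroot)
end
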